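/- Assume b₁, …, b₅ are pairwise distinct complex numbers. Let ι′ : ℂ[x, y₈] → ℂ[x, y₇, y₈] be the canonical inclusion of polynomial rings. Then the preimage (Ideal.comap ι′) of the ideal generated by f₁₄, f₁₅, f₁₆ is the principal ideal of ℂ[x, y₈] generated by y₈³ − k₃(x)²k₂(x). -/

import Mathlib

open MvPolynomial

/-- `k₃(x) = (x−b₁)(x−b₂)(x−b₃)` in `ℂ[x,y₇,y₈]` (variables `X 0 = x`, `X 1 = y₇`, `X 2 = y₈`). -/
noncomputable def k3X4 (b : Fin 5 → ℂ) : MvPolynomial (Fin 3) ℂ :=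
  (X 0 - C (b 0)) * (X 0 - C (b 1)) * (X 0 - C (b 2))

/-- `k₂(x) = (x−b₄)(x−b₅)` in `ℂ[x,y₇,y₈]`. -/
noncomputable def k2X4 (b : Fin 5 → ℂ) : MvPolynomial (Fin 3) ℂ :=
  (X 0 - C (b 3)) * (X 0 - C (b 4))

/-- `k₃(x)` in `ℂ[x,y₈]` (variables `X 0 = x`, `X 1 = y₈`). -/
noncomputable def k3X7 (b : Fin 5 → ℂ) : MvPolynomial (Fin 2) ℂ :=
  (X 0 - C (b 0)) * (X 0 - C (b 1)) * (X 0 - C (b 2))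

/-- `k₂(x)` in `ℂ[x,y₈]`. -/
noncomputable def k2X7 (b : Fin 5 → ℂ) : MvPolynomial (Fin 2) ℂ :=
  (X 0 - C (b 3)) * (X 0 - C (b 4))

/-!
Over `K = ℂ(x)` let `w` be a cube root of `k₃²k₂`. The point `(x, w²/k₃, w)` kills `f₁₄, f₁₅, f₁₆`,
so the preimage lies in the kernel of `ℂ[x, y₈] → K[w]`, `y₈ ↦ w`. Dividing by the monic
`y₈³ − k₃²k₂` leaves a remainder of `y₈`-degree `< 3`, and `1, w, w²` are linearly independent
over `K`, so this kernel is generated by `y₈³ − k₃²k₂`. Conversely `y₈³ − k₃²k₂ = y₈ f₁₆ + k₃ f₁₅`.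
-/

open scoped Polynomial

theorem MvPolynomial.exists_eq_mul_X_one_pow_three_sub_add {R : Type*} [CommRing R] (κ : R[X])
    (g : MvPolynomial (Fin 2) R) :
    ∃ (q : MvPolynomial (Fin 2) R) (c₀ c₁ c₂ : R[X]),
      g = q * (X 1 ^ 3 - Polynomial.aeval (X 0) κ) + Polynomial.aeval (X 0) c₀ +
        Polynomial.aeval (X 0) c₁ * X 1 + Polynomial.aeval (X 0) c₂ * X 1 ^ 2 := by
  induction g using MvPolynomial.induction_on with
  | C a => exact ⟨0, Polynomial.C a, 0, 0, by simp⟩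
  | add p q hp hq =>
    obtain ⟨q₁, c₀, c₁, c₂, rfl⟩ := hp
    obtain ⟨q₂, d₀, d₁, d₂, rfl⟩ := hq
    exact ⟨q₁ + q₂, c₀ + d₀, c₁ + d₁, c₂ + d₂, by simp only [map_add]; ring⟩
  | mul_X p i hp =>
    obtain ⟨q, c₀, c₁, c₂, rfl⟩ := hp
    fin_cases i
    · refine ⟨q * X 0, c₀ * Polynomial.X, c₁ * Polynomial.X, c₂ * Polynomial.X, ?_⟩
      simp only [Fin.zero_eta, map_mul, Polynomial.aeval_X]
      ring
    · refine ⟨q * X 1 + Polynomial.aeval (X 0) c₂, c₂ * κ, c₀, c₁, ?_⟩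
      simp only [Fin.mk_one, map_mul]
      ring

theorem AdjoinRoot.eq_zero_of_add_mul_root_add_mul_root_sq_eq_zero {A : Type*} [CommRing A]
    [Nontrivial A] {c a₀ a₁ a₂ : A}
    (h : of (Polynomial.X ^ 3 - Polynomial.C c) a₀ + of _ a₁ * root _ + of _ a₂ * root _ ^ 2 = 0) :
    a₀ = 0 ∧ a₁ = 0 ∧ a₂ = 0 := by
  set p : A[X] :=
    Polynomial.C a₀ + Polynomial.C a₁ * Polynomial.X + Polynomial.C a₂ * Polynomial.X ^ 2
  have hp : p = 0 := by
    by_contra hp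
    refine (Polynomial.monic_X_pow_sub_C c three_ne_zero).not_dvd_of_degree_lt hp ?_
      (mk_eq_zero.mp (by simpa [p] using h))
    rw [Polynomial.degree_X_pow_sub_C three_pos]
    exact (by simp only [p]; compute_degree : p.degree ≤ 2).trans_lt (by decide)
  refine ⟨?_, ?_, ?_⟩
  · simpa [p] using congrArg (Polynomial.coeff · 0) hp
  · simpa [p] using congrArg (Polynomial.coeff · 1) hp
  · simpa [p] using congrArg (Polynomial.coeff · 2) hp

theorem MvPolynomial.map_aeval_X_eq_algebraMap {F B σ : Type*} [CommSemiring F] [CommSemiring B]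
    [Algebra F B] [Algebra F[X] B] [IsScalarTower F F[X] B] (f : MvPolynomial σ F →ₐ[F] B) {i : σ}
    (hf : f (X i) = algebraMap F[X] B Polynomial.X) (c : F[X]) :
    f (Polynomial.aeval (X i) c) = algebraMap F[X] B c := by
  rw [← Polynomial.aeval_algHom_apply, hf, Polynomial.aeval_algebraMap_apply,
    Polynomial.aeval_X_left_apply]

section CubeRoot

variable {F : Type*} [Field F] (κ : F[X])

abbrev CubeRootExt :=
  AdjoinRoot (Polynomial.X ^ 3 - Polynomial.C (algebraMap F[X] (RatFunc F) κ))

namespace CubeRootExt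

theorem root_pow_three : (AdjoinRoot.root _ : CubeRootExt κ) ^ 3 = algebraMap F[X] _ κ := by
  have := AdjoinRoot.eval₂_root (Polynomial.X ^ 3 - Polynomial.C (algebraMap F[X] (RatFunc F) κ))
  simp only [Polynomial.eval₂_sub, Polynomial.eval₂_X_pow, Polynomial.eval₂_C, sub_eq_zero] at this
  rw [this, IsScalarTower.algebraMap_apply F[X] (RatFunc F) (CubeRootExt κ),
    AdjoinRoot.algebraMap_eq]

theorem algebraMap_mul_algebraMap_inv {p : F[X]} (hp : p ≠ 0) :
    algebraMap F[X] (CubeRootExt κ) p * algebraMap (RatFunc F) _ (algebraMap F[X] _ p)⁻¹ = 1 := by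
  rw [IsScalarTower.algebraMap_apply F[X] (RatFunc F) (CubeRootExt κ), ← map_mul,
    mul_inv_cancel₀ ((map_ne_zero_iff _ (RatFunc.algebraMap_injective F)).mpr hp), map_one]

end CubeRootExt

noncomputable def cubeRootEval : MvPolynomial (Fin 2) F →ₐ[F] CubeRootExt κ :=
  aeval ![algebraMap F[X] _ Polynomial.X, AdjoinRoot.root _]

theorem cubeRootEval_aeval_X_zero (c : F[X]) :
    cubeRootEval κ (Polynomial.aeval (X 0) c) = algebraMap F[X] _ c :=
  MvPolynomial.map_aeval_X_eq_algebraMap _ (by simp [cubeRootEval]) c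

theorem cubeRootEval_X_one : cubeRootEval κ (X 1) = AdjoinRoot.root _ := by
  simp [cubeRootEval]

theorem cubeRootEval_X_one_pow_three_sub :
    cubeRootEval κ (X 1 ^ 3 - Polynomial.aeval (X 0) κ) = 0 := by
  rw [map_sub, map_pow, cubeRootEval_X_one, cubeRootEval_aeval_X_zero, CubeRootExt.root_pow_three,
    sub_self]

theorem ker_cubeRootEval :
    RingHom.ker (cubeRootEval κ) = Ideal.span {X 1 ^ 3 - Polynomial.aeval (X 0) κ} := by
  refine le_antisymm (fun g hg => ?_) ?_
  · obtain ⟨q, c₀, c₁, c₂, rfl⟩ := MvPolynomial.exists_eq_mul_X_one_pow_three_sub_add κ g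
    rw [RingHom.mem_ker] at hg
    simp only [map_add, map_mul, map_pow, cubeRootEval_X_one_pow_three_sub,
      cubeRootEval_aeval_X_zero, cubeRootEval_X_one, mul_zero, zero_add, AdjoinRoot.algebraMap_eq,
      IsScalarTower.algebraMap_apply F[X] (RatFunc F) (CubeRootExt κ)] at hg
    obtain ⟨h₀, h₁, h₂⟩ := AdjoinRoot.eq_zero_of_add_mul_root_add_mul_root_sq_eq_zero hg
    simp only [map_eq_zero_iff _ (RatFunc.algebraMap_injective F)] at h₀ h₁ h₂
    subst h₀ h₁ h₂
    simpa using Ideal.mul_mem_left _ q (Ideal.mem_span_singleton_self _)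
  · rw [Ideal.span_le, Set.singleton_subset_iff]
    exact cubeRootEval_X_one_pow_three_sub κ

end CubeRoot

section Surface

variable (b : Fin 5 → ℂ)

noncomputable def k3Poly : ℂ[X] :=
  (Polynomial.X - Polynomial.C (b 0)) * (Polynomial.X - Polynomial.C (b 1)) *
    (Polynomial.X - Polynomial.C (b 2))

noncomputable def k2Poly : ℂ[X] :=
  (Polynomial.X - Polynomial.C (b 3)) * (Polynomial.X - Polynomial.C (b 4))

theorem k3Poly_ne_zero : k3Poly b ≠ 0 :=
  (((Polynomial.monic_X_sub_C _).mul (Polynomial.monic_X_sub_C _)).mul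
    (Polynomial.monic_X_sub_C _)).ne_zero

theorem k3X4_eq_aeval : k3X4 b = Polynomial.aeval (X 0) (k3Poly b) := by simp [k3X4, k3Poly]

theorem k2X4_eq_aeval : k2X4 b = Polynomial.aeval (X 0) (k2Poly b) := by simp [k2X4, k2Poly]

theorem k3X7_eq_aeval : k3X7 b = Polynomial.aeval (X 0) (k3Poly b) := by simp [k3X7, k3Poly]

theorem k2X7_eq_aeval : k2X7 b = Polynomial.aeval (X 0) (k2Poly b) := by simp [k2X7, k2Poly]

noncomputable def inclusionX7X4 : MvPolynomial (Fin 2) ℂ →ₐ[ℂ] MvPolynomial (Fin 3) ℂ :=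
  aeval ![X 0, X 2]

noncomputable def idealX4 : Ideal (MvPolynomial (Fin 3) ℂ) :=
  Ideal.span {X 1 ^ 2 - X 2 * k2X4 b, X 1 * X 2 - k2X4 b * k3X4 b, X 2 ^ 2 - X 1 * k3X4 b}

/-- The point `(x, w²/k₃, w)` of the surface, where `w³ = k₃²k₂` over `ℂ(x)`. -/
noncomputable def cubeRootEvalX4 :
    MvPolynomial (Fin 3) ℂ →ₐ[ℂ] CubeRootExt (k3Poly b ^ 2 * k2Poly b) :=
  aeval ![algebraMap ℂ[X] _ Polynomial.X,
    AdjoinRoot.root _ ^ 2 * algebraMap (RatFunc ℂ) _ (algebraMap ℂ[X] (RatFunc ℂ) (k3Poly b))⁻¹,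
    AdjoinRoot.root _]

theorem cubeRootEvalX4_comp_inclusionX7X4 :
    (cubeRootEvalX4 b).comp inclusionX7X4 = cubeRootEval (k3Poly b ^ 2 * k2Poly b) := by
  refine MvPolynomial.algHom_ext fun i => ?_
  fin_cases i <;> simp [cubeRootEvalX4, inclusionX7X4, cubeRootEval]

theorem idealX4_le_ker_cubeRootEvalX4 : idealX4 b ≤ RingHom.ker (cubeRootEvalX4 b) := by
  set w : CubeRootExt (k3Poly b ^ 2 * k2Poly b) := AdjoinRoot.root _
  set v : CubeRootExt (k3Poly b ^ 2 * k2Poly b) :=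
    algebraMap (RatFunc ℂ) _ (algebraMap ℂ[X] (RatFunc ℂ) (k3Poly b))⁻¹
  have heval : ∀ c, cubeRootEvalX4 b (Polynomial.aeval (X 0) c) = algebraMap ℂ[X] _ c :=
    MvPolynomial.map_aeval_X_eq_algebraMap _ (by simp [cubeRootEvalX4])
  simp only [idealX4, Ideal.span_le, Set.insert_subset_iff, Set.singleton_subset_iff,
    SetLike.mem_coe, RingHom.mem_ker, map_sub, map_mul, map_pow, k3X4_eq_aeval, k2X4_eq_aeval,
    heval]
  set u₃ := algebraMap ℂ[X] (CubeRootExt (k3Poly b ^ 2 * k2Poly b)) (k3Poly b)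
  set u₂ := algebraMap ℂ[X] (CubeRootExt (k3Poly b ^ 2 * k2Poly b)) (k2Poly b)
  have hv : u₃ * v = 1 := CubeRootExt.algebraMap_mul_algebraMap_inv _ (k3Poly_ne_zero b)
  have hw : w ^ 3 = u₃ ^ 2 * u₂ := by
    rw [CubeRootExt.root_pow_three, ← map_pow, ← map_mul]
  simp only [cubeRootEvalX4, aeval_X, Matrix.cons_val]
  refine ⟨?_, ?_, ?_⟩
  · linear_combination (w * v ^ 2) * hw + w * u₂ * (u₃ * v + 1) * hv
  · linear_combination v * hw + u₂ * u₃ * hv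
  · linear_combination (-w ^ 2) * hv

theorem inclusionX7X4_mem_idealX4 : inclusionX7X4 (X 1 ^ 3 - k3X7 b ^ 2 * k2X7 b) ∈ idealX4 b := by
  have h : inclusionX7X4 (X 1 ^ 3 - k3X7 b ^ 2 * k2X7 b) =
      X 2 * (X 2 ^ 2 - X 1 * k3X4 b) + k3X4 b * (X 1 * X 2 - k2X4 b * k3X4 b) := by
    simp only [inclusionX7X4, k3X7, k2X7, k3X4, k2X4, map_sub, map_mul, map_pow, aeval_X, aeval_C,
      algebraMap_eq, Matrix.cons_val]
    ring
  rw [h]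
  exact add_mem (Ideal.mul_mem_left _ _ (Ideal.subset_span (by simp)))
    (Ideal.mul_mem_left _ _ (Ideal.subset_span (by simp)))

end Surface

theorem comap_ideal_X4_to_X7_general (b : Fin 5 → ℂ) :
    Ideal.comap
        ((MvPolynomial.aeval (![X 0, X 2] : Fin 2 → MvPolynomial (Fin 3) ℂ) :
          MvPolynomial (Fin 2) ℂ →ₐ[ℂ] MvPolynomial (Fin 3) ℂ).toRingHom)
        (Ideal.span {(X 1 : MvPolynomial (Fin 3) ℂ) ^ 2 - X 2 * k2X4 b,
          X 1 * X 2 - k2X4 b * k3X4 b,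
          (X 2) ^ 2 - X 1 * k3X4 b}) =
      Ideal.span {(X 1 : MvPolynomial (Fin 2) ℂ) ^ 3 - (k3X7 b) ^ 2 * k2X7 b} := by
  change Ideal.comap inclusionX7X4.toRingHom (idealX4 b) = _
  refine le_antisymm ?_ ((Ideal.span_singleton_le_iff_mem _).mpr (inclusionX7X4_mem_idealX4 b))
  calc Ideal.comap inclusionX7X4.toRingHom (idealX4 b)
      ≤ Ideal.comap inclusionX7X4.toRingHom (RingHom.ker (cubeRootEvalX4 b)) :=
        Ideal.comap_mono (idealX4_le_ker_cubeRootEvalX4 b)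
    _ = RingHom.ker (cubeRootEval (k3Poly b ^ 2 * k2Poly b)) := by
        rw [← cubeRootEvalX4_comp_inclusionX7X4]
        rfl
    _ = _ := by rw [ker_cubeRootEval, k3X7_eq_aeval, k2X7_eq_aeval, map_mul, map_pow]

/-- For pairwise distinct `b₁, …, b₅`, the preimage under the inclusion
`ι′ : ℂ[x, y₈] → ℂ[x, y₇, y₈]` (`x ↦ x`, `y₈ ↦ y₈`) of the ideal `(f₁₄, f₁₅, f₁₆)` is the
principal ideal generated by `y₈³ − k₃(x)²k₂(x)`. -/
theorem comap_ideal_X4_to_X7 (b : Fin 5 → ℂ) (hb : Function.Injective b) :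
    Ideal.comap
        ((MvPolynomial.aeval (![X 0, X 2] : Fin 2 → MvPolynomial (Fin 3) ℂ) :
          MvPolynomial (Fin 2) ℂ →ₐ[ℂ] MvPolynomial (Fin 3) ℂ).toRingHom)
        (Ideal.span {(X 1 : MvPolynomial (Fin 3) ℂ) ^ 2 - X 2 * k2X4 b,
          X 1 * X 2 - k2X4 b * k3X4 b,
          (X 2) ^ 2 - X 1 * k3X4 b}) =
      Ideal.span {(X 1 : MvPolynomial (Fin 2) ℂ) ^ 3 - (k3X7 b) ^ 2 * k2X7 b} :=
  comap_ideal_X4_to_X7_general b
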